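/- arXiv:2305.03822 — 2 statements merged into one kernel-verified Lean document; each statement's English description precedes it below -/
import Mathlib

section
/- Let 𝔤 be a complex vector space, M a nonzero complex vector space, u ↦ (u_m)_{m∈ℤ} a linear map from 𝔤 to families of endomorphisms of M, β : 𝔤 × 𝔤 → 𝔤 a bilinear map, and ⟨·,·⟩ a bilinear form on 𝔤. Assume: (i) for all u,v ∈ 𝔤 and m,n ∈ ℤ, [u_m, v_n] = (β(u,v))_{m+n} + m·⟨u,v⟩·δ_{m,-n}·id_M; (ii) the linear map u ↦ u_{-1} ∈ End(M) is injective. Then: β is antisymmetric and satisfies the Jacobi identity (so (𝔤, β) is a Lie algebra), ⟨·,·⟩ is symmetric, and ⟨·,·⟩ is invariant: ⟨β(w,u), v⟩ = -⟨u, β(w,v)⟩ for all u,v,w ∈ 𝔤. -/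
/-- Abstract structure of the weight-one subspace of a CFT-type VOA: if a linear family of
operators `u ↦ (uₘ)` on a nonzero space `M` satisfies
`[uₘ, vₙ] = (β(u,v))_{m+n} + m⟨u,v⟩δ_{m,-n}·id` and `u ↦ u_{-1}` is injective, then `β` is a
Lie bracket, `⟨·,·⟩` is symmetric, and `⟨·,·⟩` is invariant. -/
theorem stmt11 {g M : Type*} [AddCommGroup g] [Module ℂ g]
    [AddCommGroup M] [Module ℂ M] [Nontrivial M]
    (A : g →ₗ[ℂ] (ℤ → Module.End ℂ M))
    (β : g →ₗ[ℂ] g →ₗ[ℂ] g) (Bf : g →ₗ[ℂ] g →ₗ[ℂ] ℂ)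
    (hcomm : ∀ (u v : g) (m n : ℤ),
      A u m * A v n - A v n * A u m
        = A (β u v) (m + n) + (if m = -n then (m : ℂ) * Bf u v else 0) • (1 : Module.End ℂ M))
    (hinj : Function.Injective fun u : g => A u (-1)) :
    (∀ u v : g, β u v = - β v u) ∧
    (∀ u v w : g, β (β u v) w + β (β v w) u + β (β w u) v = 0) ∧
    (∀ u v : g, Bf u v = Bf v u) ∧
    (∀ u v w : g, Bf (β w u) v = - Bf u (β w v)) := by
  have hzero : ∀ x : g, A x (-1) = 0 → x = 0 := by
    intro x hx
    have : A x (-1) = A 0 (-1) := by simp [hx]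
    exact hinj this
  have hsmul : ∀ c : ℂ, c • (1 : Module.End ℂ M) = 0 → c = 0 := by
    intro c hc
    obtain ⟨m, hm⟩ := exists_ne (0 : M)
    have h := DFunLike.congr_fun hc m
    simp only [LinearMap.smul_apply, Module.End.one_apply, LinearMap.zero_apply] at h
    rcases smul_eq_zero.mp h with h | h
    · exact h
    · exact absurd h hm
  -- antisymmetry
  have anti : ∀ u v : g, β u v = - β v u := by
    intro u v
    have h1 := hcomm u v 0 (-1)
    have h2 := hcomm v u (-1) 0
    norm_num at h1 h2
    have key : A (β u v + β v u) (-1) = 0 := by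
      have e : A (β u v) (-1) + A (β v u) (-1)
          = (A u 0 * A v (-1) - A v (-1) * A u 0)
            + (A v (-1) * A u 0 - A u 0 * A v (-1)) := by rw [h1, h2]
      have e2 : (A u 0 * A v (-1) - A v (-1) * A u 0)
            + (A v (-1) * A u 0 - A u 0 * A v (-1)) = 0 := by abel
      simpa [map_add, e2] using e
    have h0 := hzero _ key
    rw [eq_comm, neg_eq_iff_add_eq_zero, add_comm]
    exact h0
  -- Jacobi identity
  have jac : ∀ u v w : g, β (β u v) w + β (β v w) u + β (β w u) v = 0 := by
    intro u v w
    have h1 := hcomm u v 0 0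
    have h2 := hcomm v w 0 (-1)
    have h3 := hcomm w u (-1) 0
    have h4 := hcomm (β u v) w 0 (-1)
    have h5 := hcomm (β v w) u (-1) 0
    have h6 := hcomm (β w u) v (-1) 0
    norm_num at h1 h2 h3 h4 h5 h6
    have key : A (β (β u v) w + β (β v w) u + β (β w u) v) (-1) = 0 := by
      have e : A (β (β u v) w) (-1) + A (β (β v w) u) (-1) + A (β (β w u) v) (-1)
          = (A (β u v) 0 * A w (-1) - A w (-1) * A (β u v) 0)
            + (A (β v w) (-1) * A u 0 - A u 0 * A (β v w) (-1))
            + (A (β w u) (-1) * A v 0 - A v 0 * A (β w u) (-1)) := by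
        rw [h4, h5, h6]
      rw [← h1, ← h2, ← h3] at e
      have e2 : A (β (β u v) w) (-1) + A (β (β v w) u) (-1) + A (β (β w u) v) (-1) = 0 := by
        rw [e]; noncomm_ring
      simpa [map_add] using e2
    exact hzero _ key
  -- symmetry of the form
  have symm : ∀ u v : g, Bf u v = Bf v u := by
    intro u v
    have h1 := hcomm u v 1 (-1)
    have h2 := hcomm v u (-1) 1
    norm_num at h1 h2
    have hb : A (β u v) 0 + A (β v u) 0 = 0 := by
      have hβ : β u v + β v u = 0 := by rw [anti u v]; abel
      have := congrArg (fun x => A x 0) hβ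
      simpa [map_add] using this
    have e2 : (Bf u v - Bf v u) • (1 : Module.End ℂ M) = 0 := by
      calc (Bf u v - Bf v u) • (1 : Module.End ℂ M)
          = (A (β u v) 0 + Bf u v • (1 : Module.End ℂ M))
              + (A (β v u) 0 + -(Bf v u • (1 : Module.End ℂ M)))
              - (A (β u v) 0 + A (β v u) 0) := by
            rw [sub_smul]; abel
        _ = (A u 1 * A v (-1) - A v (-1) * A u 1)
              + (A v (-1) * A u 1 - A u 1 * A v (-1)) - 0 := by rw [← h1, ← h2, hb]
        _ = 0 := by noncomm_ring
    exact sub_eq_zero.mp (hsmul _ e2)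
  -- invariance
  have inv : ∀ u v w : g, Bf (β w u) v = - Bf u (β w v) := by
    intro u v w
    have ha := hcomm w u 0 1
    have hb2 := hcomm u v 1 (-1)
    have hc2 := hcomm v w (-1) 0
    have h4 := hcomm (β w u) v 1 (-1)
    have h5 := hcomm (β u v) w 0 0
    have h6 := hcomm (β v w) u (-1) 1
    norm_num at ha hb2 hc2 h4 h5 h6
    set a := A w 0
    set b := A u 1
    set c := A v (-1)
    -- central elements commute
    have central : ∀ (k : ℂ) (x y : Module.End ℂ M),
        (x + k • 1) * y - y * (x + k • 1) = x * y - y * x := by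
      intro k x y
      simp only [add_mul, mul_add, smul_mul_assoc, mul_smul_comm, one_mul, mul_one]
      abel
    -- E2 : commutator of [b,c] with a
    have E2 : (b * c - c * b) * a - a * (b * c - c * b)
        = A (β (β u v) w) 0 := by
      rw [hb2, central, h5]
    have hsum : A (β (β u v) w) 0 + A (β (β v w) u) 0 + A (β (β w u) v) 0 = 0 := by
      have := congrArg (fun x => A x 0) (jac u v w)
      simpa [map_add] using this
    have e0 : (Bf (β w u) v - Bf (β v w) u) • (1 : Module.End ℂ M) = 0 := by
      calc (Bf (β w u) v - Bf (β v w) u) • (1 : Module.End ℂ M)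
          = (A (β (β w u) v) 0 + Bf (β w u) v • (1 : Module.End ℂ M))
              + A (β (β u v) w) 0
              + (A (β (β v w) u) 0 + -(Bf (β v w) u • (1 : Module.End ℂ M)))
              - (A (β (β u v) w) 0 + A (β (β v w) u) 0 + A (β (β w u) v) 0) := by
            rw [sub_smul]; abel
        _ = (A (β w u) 1 * c - c * A (β w u) 1)
              + ((b * c - c * b) * a - a * (b * c - c * b))
              + (A (β v w) (-1) * b - b * A (β v w) (-1)) - 0 := by
            rw [hsum, ← h4, ← E2, ← h6]
        _ = ((a * b - b * a) * c - c * (a * b - b * a))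
              + ((b * c - c * b) * a - a * (b * c - c * b))
              + ((c * a - a * c) * b - b * (c * a - a * c)) - 0 := by
            rw [← ha, ← hc2]
        _ = 0 := by noncomm_ring
    have he : Bf (β w u) v = Bf (β v w) u := sub_eq_zero.mp (hsmul _ e0)
    rw [he, symm (β v w) u, anti v w, map_neg]
  exact ⟨anti, jac, symm, inv⟩
end

section
/- Let V be a vector space, let A, B : ℤ → End(V) be families of endomorphisms, let N be a natural number, and suppose there exist families D⁰, …, D^{N-1} : ℤ → End(V) such that for all integers m, k: [A_m, B_k] = ∑_{l=0}^{N-1} m^l · D^l_{m+k}. Then there exist families E⁰, …, E^{N-1} : ℤ → End(V) such that for all integers m, k: [B_k, A_m] = ∑_{l=0}^{N-1} k^l · E^l_{m+k}. (Thus the 'locality' relation between two families of operators is symmetric.) -/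
/-- Symmetry of locality: if `[Aₘ, Bₖ] = ∑_{l<N} mˡ D^l_{m+k}` for some families `D^l`, then
there are families `E^l` with `[Bₖ, Aₘ] = ∑_{l<N} kˡ E^l_{m+k}`. -/
theorem stmt14 {K V : Type*} [Field K] [AddCommGroup V] [Module K V]
    (A B : ℤ → Module.End K V) (N : ℕ) (D : ℕ → ℤ → Module.End K V)
    (h : ∀ m k : ℤ, A m * B k - B k * A m = ∑ l ∈ Finset.range N, (m ^ l) • D l (m + k)) :
    ∃ E : ℕ → ℤ → Module.End K V, ∀ m k : ℤ,
      B k * A m - A m * B k = ∑ l ∈ Finset.range N, (k ^ l) • E l (m + k) := by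
  refine ⟨fun j n => ∑ l ∈ Finset.range N,
      (if j ≤ l then ((-1 : ℤ) ^ (j + 1) * l.choose j * n ^ (l - j)) else 0) • D l n,
      fun m k => ?_⟩
  have h1 : B k * A m - A m * B k = ∑ l ∈ Finset.range N, (-(m ^ l) : ℤ) • D l (m + k) := by
    have := h m k
    have : B k * A m - A m * B k = -(A m * B k - B k * A m) := (neg_sub _ _).symm
    rw [this, h m k, ← Finset.sum_neg_distrib]
    exact Finset.sum_congr rfl fun l _ => (neg_smul _ _).symm
  rw [h1]
  simp_rw [Finset.smul_sum, smul_smul]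
  rw [Finset.sum_comm]
  refine Finset.sum_congr rfl fun l hl => ?_
  rw [← Finset.sum_smul]
  congr 1
  have hlN : l < N := Finset.mem_range.mp hl
  have hsub : Finset.range (l + 1) ⊆ Finset.range N := by
    intro x hx
    simp only [Finset.mem_range] at *
    omega
  rw [← Finset.sum_subset hsub (fun x _ hx => by
    simp only [Finset.mem_range, not_lt] at hx
    rw [if_neg (by omega), mul_zero])]
  have hm : m = -k + (m + k) := by ring
  have hb := add_pow (-k) (m + k) l
  calc -(m ^ l : ℤ) = -((-k + (m + k)) ^ l) := by ring_nf
    _ = -(∑ j ∈ Finset.range (l + 1), (-k) ^ j * (m + k) ^ (l - j) * l.choose j) := by rw [hb]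
    _ = ∑ j ∈ Finset.range (l + 1),
        k ^ j * (if j ≤ l then ((-1 : ℤ) ^ (j + 1) * l.choose j * (m + k) ^ (l - j)) else 0) := by
      rw [← Finset.sum_neg_distrib]
      refine Finset.sum_congr rfl fun j hj => ?_
      rw [if_pos (by simpa using Nat.lt_succ_iff.mp (Finset.mem_range.mp hj))]
      rw [neg_pow, pow_succ]
      ring
end
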